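/- arXiv:2010.04627 — 3 statements merged into one kernel-verified Lean document; each statement's English description precedes it below -/
import Mathlib

section
/- Let D ≥ 1 and consider a complete binary tree of depth D with real split values s_t ≠ 0 at every internal node. Then for every node t ∈ {2, …, 2^{D+1} − 1}, the reward q_t satisfies: q_t > 0 if t lies on the traversal path, and q_t < 0 otherwise. (Lemma 1, sign characterization of rewards.) -/
/-- The traversal path of a binary tree with split values `s`:
`path s 0 = 1` (root), and from node `p_d` we go to the left child `2 * p_d`
if `s (p_d) < 0` and to the right child `2 * p_d + 1` otherwise. -/
noncomputable def path (s : ℕ → ℝ) : ℕ → ℕ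
  | 0 => 1
  | d + 1 => if s (path s d) < 0 then 2 * path s d else 2 * path s d + 1

/-- The reward `q_t`: `q 1 = 1`, and for `t ≥ 2`, `q t` is the minimum over all
proper ancestors `t'` of `t` of `s t'` if `t` descends through the right child of `t'`
and `-s t'` if `t` descends through the left child of `t'`.  Equivalently, recursively,
`q t = min (±s (t/2)) (q (t/2))` for `t ≥ 4`, with base cases `q 2 = -s 1`, `q 3 = s 1`. -/
noncomputable def reward (s : ℕ → ℝ) : ℕ → ℝ
  | 0 => 0
  | 1 => 1
  | 2 => - s 1
  | 3 => s 1
  | (t + 4) =>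
      min (if (t + 4) % 2 = 1 then s ((t + 4) / 2) else - s ((t + 4) / 2))
        (reward s ((t + 4) / 2))
decreasing_by omega

/-! A node is on the traversal path exactly when its parent is and the signed split value
`edgeSign s t` of the edge into it is positive; the reward is the minimum of these signed
values along the ancestry. Hence by induction on the depth, the reward of a node on the path
is a minimum of positive numbers, while off the path the first wrong turn contributes a
negative term (split values are nonzero). -/

noncomputable def edgeSign (s : ℕ → ℝ) (t : ℕ) : ℝ :=
  if t % 2 = 1 then s (t / 2) else - s (t / 2)

def OnPath (s : ℕ → ℝ) (t : ℕ) : Prop := ∃ d, path s d = t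

section

variable (s : ℕ → ℝ)

lemma path_zero : path s 0 = 1 := by
  rw [path]

lemma path_succ (d : ℕ) :
    path s (d + 1) = if s (path s d) < 0 then 2 * path s d else 2 * path s d + 1 := by
  rw [path]

lemma two_pow_le_path : ∀ d, 2 ^ d ≤ path s d
  | 0 => (path_zero s).ge
  | d + 1 => by
    have := two_pow_le_path d
    rw [path_succ, pow_succ]
    split <;> omega

lemma onPath_one : OnPath s 1 :=
  ⟨0, path_zero s⟩

lemma reward_of_div_two_eq_one {t : ℕ} (h : t / 2 = 1) :
    reward s t = edgeSign s t := by
  obtain rfl | rfl : t = 2 ∨ t = 3 := by omega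
  all_goals simp [reward, edgeSign]

lemma reward_of_four_le {t : ℕ} (ht : 4 ≤ t) :
    reward s t = min (edgeSign s t) (reward s (t / 2)) := by
  obtain ⟨m, rfl⟩ : ∃ m, t = m + 4 := ⟨t - 4, by omega⟩
  rw [reward, edgeSign]

lemma path_succ_eq_iff {t : ℕ} (hs : s (t / 2) ≠ 0) (d : ℕ) :
    path s (d + 1) = t ↔ path s d = t / 2 ∧ 0 < edgeSign s t := by
  rw [path_succ, edgeSign]
  constructor
  · intro h
    have hparent : path s d = t / 2 := by split at h <;> omega
    refine ⟨hparent, ?_⟩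
    rw [← hparent] at hs ⊢
    split at h
    · rw [if_neg (by omega)]
      linarith
    · rw [if_pos (by omega)]
      exact lt_of_le_of_ne (not_lt.mp ‹_›) hs.symm
  · rintro ⟨hparent, hpos⟩
    rw [hparent]
    split at hpos
    · rw [if_neg (by linarith)]
      omega
    · rw [if_pos (by linarith)]
      omega

lemma onPath_iff {t : ℕ} (ht : 2 ≤ t) (hs : s (t / 2) ≠ 0) :
    OnPath s t ↔ OnPath s (t / 2) ∧ 0 < edgeSign s t := by
  constructor
  · rintro ⟨_ | d, hd⟩
    · rw [path_zero] at hd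
      omega
    · obtain ⟨hparent, hpos⟩ := (path_succ_eq_iff s hs d).mp hd
      exact ⟨⟨d, hparent⟩, hpos⟩
  · rintro ⟨⟨d, hparent⟩, hpos⟩
    exact ⟨d + 1, (path_succ_eq_iff s hs d).mpr ⟨hparent, hpos⟩⟩

theorem reward_sign {t : ℕ} (ht : 2 ≤ t) (hs : ∀ t', 1 ≤ t' → t' ≤ t / 2 → s t' ≠ 0) :
    (OnPath s t → 0 < reward s t) ∧ (¬ OnPath s t → reward s t < 0) := by
  induction t using Nat.strong_induction_on with
  | _ t ih =>
  have hsu : s (t / 2) ≠ 0 := hs _ (by omega) le_rfl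
  have he : edgeSign s t ≠ 0 := by
    unfold edgeSign
    split <;> simpa using hsu
  rw [onPath_iff s ht hsu]
  rcases Nat.lt_or_ge t 4 with h4 | h4
  · have hu : t / 2 = 1 := by omega
    rw [reward_of_div_two_eq_one s hu, hu]
    simp only [onPath_one, true_and, not_lt]
    exact ⟨id, fun h => lt_of_le_of_ne h he⟩
  · obtain ⟨ih_pos, ih_neg⟩ :=
      ih (t / 2) (by omega) (by omega) fun t' h1 h2 => hs t' h1 (by omega)
    rw [reward_of_four_le s h4]
    refine ⟨fun ⟨hu, hpos⟩ => lt_min hpos (ih_pos hu), fun hnot => ?_⟩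
    by_cases hu : OnPath s (t / 2)
    · have : edgeSign s t < 0 := lt_of_le_of_ne (not_lt.mp fun h => hnot ⟨hu, h⟩) he
      exact (min_le_left _ _).trans_lt this
    · exact (min_le_right _ _).trans_lt (ih_neg hu)

lemma exists_le_path_eq_iff {D t : ℕ} (ht : t < 2 ^ (D + 1)) :
    (∃ d ≤ D, path s d = t) ↔ OnPath s t := by
  refine ⟨fun ⟨d, _, hd⟩ => ⟨d, hd⟩, fun ⟨d, hd⟩ => ⟨d, ?_, hd⟩⟩
  have : 2 ^ d < 2 ^ (D + 1) := (two_pow_le_path s d).trans_lt (hd ▸ ht)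
  have := (Nat.pow_lt_pow_iff_right (by norm_num)).mp this
  omega

end

theorem stmt_0_general (D : ℕ) (s : ℕ → ℝ)
    (hs : ∀ t, 1 ≤ t → t ≤ 2 ^ D - 1 → s t ≠ 0)
    (t : ℕ) (ht2 : 2 ≤ t) (htN : t ≤ 2 ^ (D + 1) - 1) :
    ((∃ d ≤ D, path s d = t) → 0 < reward s t) ∧
    (¬ (∃ d ≤ D, path s d = t) → reward s t < 0) := by
  have hpow : 2 ^ (D + 1) = 2 * 2 ^ D := by ring
  rw [exists_le_path_eq_iff s (by omega)]
  exact reward_sign s ht2 fun t' h1 h2 => hs t' h1 (by omega)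

/-- Lemma 1 (sign characterization of rewards): for a complete binary tree of depth
`D ≥ 1` with nonzero split values at every internal node, every node
`t ∈ {2, …, 2^(D+1) - 1}` has `q t > 0` if `t` lies on the traversal path and
`q t < 0` otherwise. -/
theorem stmt_0 (D : ℕ) (hD : 1 ≤ D) (s : ℕ → ℝ)
    (hs : ∀ t, 1 ≤ t → t ≤ 2 ^ D - 1 → s t ≠ 0)
    (t : ℕ) (ht2 : 2 ≤ t) (htN : t ≤ 2 ^ (D + 1) - 1) :
    ((∃ d ≤ D, path s d = t) → 0 < reward s t) ∧
    (¬ (∃ d ≤ D, path s d = t) → reward s t < 0) :=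
  stmt_0_general D s hs t ht2 htN
end

section
/- Let λ > 0, let q_{it} be real rewards, and let a* be the unique minimizer over the set C ∩ [0,1]^N = {a ∈ [0,1]^N : a_t ≤ a_{p(t)} for all t ≥ 2} of h(a) = Σ_{t=1}^N [ (λ/2) a_t² + ½ Σ_{i=1}^n max(q_{it} + ½ − a_t, 0)² ]. Define z*_{it} = max(0, min(a*_t, q_{it} + ½)). Then (z*, a*) is the unique minimizer of Problem (P). (Proposition 2.) -/
/-- Feasibility for Problem (P): nodes are indexed by `t : Fin N` representing node
number `(t : ℕ) + 1 ∈ {1, …, N}`; the parent of node number `m ≥ 2` is node number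
`⌊m/2⌋`, i.e. the parent of index `t` (with `(t : ℕ) ≥ 1`) is the index
`((t : ℕ) + 1) / 2 - 1`.  The constraints are `a_t ≤ a_{p(t)}` for all non-root
nodes, `0 ≤ z_{it} ≤ a_t` for all `i, t`, and `0 ≤ a_t ≤ 1` for all `t`. -/
def Feasible (n N : ℕ) (p : (Fin n → Fin N → ℝ) × (Fin N → ℝ)) : Prop :=
  (∀ t : Fin N, 1 ≤ (t : ℕ) →
      p.2 t ≤ p.2 ⟨((t : ℕ) + 1) / 2 - 1, by have := t.isLt; omega⟩) ∧
  (∀ (i : Fin n) (t : Fin N), 0 ≤ p.1 i t ∧ p.1 i t ≤ p.2 t) ∧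
  (∀ t : Fin N, 0 ≤ p.2 t ∧ p.2 t ≤ 1)

/-- The objective of Problem (P):
`(λ/2) ∑_t a_t² + ½ ∑_i ∑_t (z_{it} − q_{it} − ½)²`. -/
noncomputable def objP (n N : ℕ) (lam : ℝ) (q : Fin n → Fin N → ℝ)
    (p : (Fin n → Fin N → ℝ) × (Fin N → ℝ)) : ℝ :=
  lam / 2 * ∑ t, (p.2 t) ^ 2 + 1 / 2 * ∑ i, ∑ t, (p.1 i t - q i t - 1 / 2) ^ 2

/-!
For fixed `a`, Problem (P) separates into the one-dimensional problems
`min_{0 ≤ z ≤ a_t} (z - c)²` with `c = q_{it} + ½`, solved by the projection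
`max 0 (min a_t c)` of `c` onto `[0, a_t]`. Since `[0, a_t]` is convex,
`(z - c)² ≥ (proj - c)² + (z - proj)²`, and the optimal value is
`max (c - a_t) 0 ² + min c 0 ²`. Hence the objective of (P) at `(z, a)` is at least
`h(a) + K + ½ ‖z - z(a)‖²` for a constant `K`, with equality at `z = z(a)`;
so minimising (P) amounts to minimising `h`, and the minimiser is unique because
that of `h` is.
-/

open Finset

section Projection

variable {a c : ℝ}

theorem sq_clamp_sub (ha : 0 ≤ a) :
    (max 0 (min a c) - c) ^ 2 = max (c - a) 0 ^ 2 + min c 0 ^ 2 := by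
  rcases le_total c 0 with hc | hc
  · rw [min_eq_right (hc.trans ha), max_eq_left hc, max_eq_right (by linarith),
      min_eq_left hc]
    ring
  · rw [min_eq_right hc]
    rcases le_total a c with hac | hac
    · rw [min_eq_left hac, max_eq_right ha, max_eq_left (by linarith)]
      ring
    · rw [min_eq_right hac, max_eq_right hc, max_eq_right (by linarith)]
      ring

theorem sq_clamp_sub_add_sq_le {z : ℝ} (hz0 : 0 ≤ z) (hza : z ≤ a) :
    (max 0 (min a c) - c) ^ 2 + (z - max 0 (min a c)) ^ 2 ≤ (z - c) ^ 2 := by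
  have ha : 0 ≤ a := hz0.trans hza
  rcases le_total c 0 with hc | hc
  · rw [min_eq_right (hc.trans ha), max_eq_left hc]
    nlinarith
  · rcases le_total a c with hac | hac
    · rw [min_eq_left hac, max_eq_right ha]
      nlinarith
    · rw [min_eq_right hac, max_eq_right hc]
      nlinarith

end Projection

theorem sum_sum_sq_pos {ι κ : Type*} [Fintype ι] [Fintype κ] {f : ι → κ → ℝ} (hf : f ≠ 0) :
    0 < ∑ i, ∑ j, f i j ^ 2 := by
  obtain ⟨i, j, hij⟩ : ∃ i j, f i j ≠ 0 := by
    by_contra! h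
    exact hf (funext₂ h)
  refine sum_pos' (fun i _ => by positivity) ⟨i, mem_univ i, ?_⟩
  exact sum_pos' (fun j _ => by positivity) ⟨j, mem_univ j, by positivity⟩

section ReducedProblem

variable {n N : ℕ} (lam : ℝ) (q : Fin n → Fin N → ℝ)

noncomputable def clampedRewards (a : Fin N → ℝ) : Fin n → Fin N → ℝ :=
  fun i t => max 0 (min (a t) (q i t + 1 / 2))

/-- The function `h` of the statement. -/
noncomputable def reducedObj (a : Fin N → ℝ) : ℝ :=
  ∑ t, (lam / 2 * a t ^ 2 + 1 / 2 * ∑ i, max (q i t + 1 / 2 - a t) 0 ^ 2)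

noncomputable def reducedObjOffset : ℝ :=
  1 / 2 * ∑ i, ∑ t, min (q i t + 1 / 2) 0 ^ 2

theorem objP_sub_reducedObj (z : Fin n → Fin N → ℝ) (a : Fin N → ℝ) :
    objP n N lam q (z, a) - reducedObj lam q a =
      1 / 2 * ∑ i, ∑ t, ((z i t - (q i t + 1 / 2)) ^ 2 - max (q i t + 1 / 2 - a t) 0 ^ 2) := by
  simp only [objP, reducedObj, sum_add_distrib, sum_sub_distrib, ← mul_sum]
  rw [sum_comm (f := fun i t => max (q i t + 1 / 2 - a t) 0 ^ 2)]
  ring_nf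

theorem objP_clampedRewards {a : Fin N → ℝ} (ha : ∀ t, 0 ≤ a t) :
    objP n N lam q (clampedRewards q a, a) = reducedObj lam q a + reducedObjOffset q := by
  rw [← sub_eq_iff_eq_add', objP_sub_reducedObj, reducedObjOffset]
  congr 1
  refine sum_congr rfl fun i _ => sum_congr rfl fun t _ => ?_
  rw [clampedRewards, sq_clamp_sub (ha t)]
  ring

theorem reducedObj_add_le_objP {z : Fin n → Fin N → ℝ} {a : Fin N → ℝ}
    (hz : ∀ i t, 0 ≤ z i t ∧ z i t ≤ a t) :
    reducedObj lam q a + reducedObjOffset q +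
        1 / 2 * ∑ i, ∑ t, (z i t - clampedRewards q a i t) ^ 2 ≤ objP n N lam q (z, a) := by
  have hpointwise : ∀ i t, min (q i t + 1 / 2) 0 ^ 2 + (z i t - clampedRewards q a i t) ^ 2 ≤
      (z i t - (q i t + 1 / 2)) ^ 2 - max (q i t + 1 / 2 - a t) 0 ^ 2 := fun i t => by
    have := sq_clamp_sub_add_sq_le (c := q i t + 1 / 2) (hz i t).1 (hz i t).2
    rw [sq_clamp_sub ((hz i t).1.trans (hz i t).2)] at this
    rw [clampedRewards]
    linarith
  have hsum := sum_le_sum fun i (_ : i ∈ univ) => sum_le_sum fun t (_ : t ∈ univ) => hpointwise i t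
  simp only [sum_add_distrib] at hsum
  have := objP_sub_reducedObj lam q z a
  rw [reducedObjOffset]
  linarith

end ReducedProblem

/-- Proposition 2: if `a*` is the unique minimizer over
`C ∩ [0,1]^N = {a ∈ [0,1]^N : a_t ≤ a_{p(t)} for all non-root t}` of
`h(a) = ∑_t [ (λ/2) a_t² + ½ ∑_i max(q_{it} + ½ − a_t, 0)² ]`, and
`z*_{it} = max(0, min(a*_t, q_{it} + ½))`, then `(z*, a*)` is the unique
minimizer of Problem (P). -/
theorem stmt_2 (n N : ℕ) (lam : ℝ)
    (q : Fin n → Fin N → ℝ)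
    (astar : Fin N → ℝ)
    (hafeas : (∀ t : Fin N, 1 ≤ (t : ℕ) →
        astar t ≤ astar ⟨((t : ℕ) + 1) / 2 - 1, by have := t.isLt; omega⟩) ∧
      ∀ t : Fin N, 0 ≤ astar t ∧ astar t ≤ 1)
    (hamin : ∀ a : Fin N → ℝ,
      ((∀ t : Fin N, 1 ≤ (t : ℕ) →
          a t ≤ a ⟨((t : ℕ) + 1) / 2 - 1, by have := t.isLt; omega⟩) ∧
        ∀ t : Fin N, 0 ≤ a t ∧ a t ≤ 1) →
      a ≠ astar →
      (∑ t, (lam / 2 * (astar t) ^ 2 + 1 / 2 * ∑ i, max (q i t + 1 / 2 - astar t) 0 ^ 2))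
        < ∑ t, (lam / 2 * (a t) ^ 2 + 1 / 2 * ∑ i, max (q i t + 1 / 2 - a t) 0 ^ 2))
    (zstar : Fin n → Fin N → ℝ)
    (hzstar : ∀ i t, zstar i t = max 0 (min (astar t) (q i t + 1 / 2))) :
    Feasible n N (zstar, astar) ∧
    ∀ p : (Fin n → Fin N → ℝ) × (Fin N → ℝ), Feasible n N p → p ≠ (zstar, astar) →
      objP n N lam q (zstar, astar) < objP n N lam q p := by
  obtain rfl : zstar = clampedRewards q astar := funext₂ hzstar
  have hz : ∀ i t, 0 ≤ clampedRewards q astar i t ∧ clampedRewards q astar i t ≤ astar t :=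
    fun i t => ⟨le_max_left _ _, max_le (hafeas.2 t).1 (min_le_left _ _)⟩
  refine ⟨⟨hafeas.1, hz, hafeas.2⟩, ?_⟩
  rintro ⟨z, a⟩ ⟨hmono, hza, ha⟩ hne
  rw [objP_clampedRewards lam q fun t => (hafeas.2 t).1]
  refine lt_of_lt_of_le ?_ (reducedObj_add_le_objP lam q hza)
  rcases eq_or_ne a astar with rfl | hane
  · have hzne : (fun i t => z i t - clampedRewards q a i t) ≠ 0 := fun h =>
      hne (Prod.ext (funext₂ fun i t => sub_eq_zero.mp (congrFun₂ h i t)) rfl)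
    linarith [sum_sum_sq_pos hzne]
  · have hdist : 0 ≤ ∑ i, ∑ t, (z i t - clampedRewards q a i t) ^ 2 := by positivity
    have hred : reducedObj lam q astar < reducedObj lam q a := hamin a ⟨hmono, ha⟩ hane
    linarith
end

section
/- Let α > 0, N ≥ 1, and reals c_1, …, c_N, and define g(a) = (α/2)a² + ½ Σ_{j=1}^N max(c_j − a, 0)². Let c_{(1)} ≥ c_{(2)} ≥ … ≥ c_{(N)} be the values sorted in nonincreasing order, let a(k) = (Σ_{j=1}^k c_{(j)})/(α + k) for k ∈ {1, …, N}, and let k* be the smallest k ∈ {1, …, N} such that a(k) > c_{(k+1)}, with the convention c_{(N+1)} = −∞ (so that k* exists). Then the unique minimizer of g over the interval [0, 1] is max(0, min(1, a(k*))). (Proposition 3.) -/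
/-!
The objective is `α`-strongly convex and its slope `α a - ∑ j, max (c j - a) 0` is monotone, so
clipping to `[0, 1]` any zero of the slope gives the unique constrained minimiser. The zero is
`max 0 (A k*)`. Minimality of `k*` says `A k ≤ d (k + 1)` for `k < k*`, and since `A (k + 1)` is a
weighted average of `A k` and `d (k + 1)`, the means increase up to `A k*`. If `A k* ≥ 0`, exactly
`d 1, …, d k*` lie above `A k*`, and `(α + k*) A k* = ∑_{j ≤ k*} d j` makes the slope vanish there.
If `A k* < 0`, then `d 1 = (α + 1) A 1 < 0`, so every hinge term vanishes at `0`.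
-/

open Finset

lemma Finset.sum_comp_eq_of_map_eq {ι : Type*} {s : Finset ι} {c d : ι → ℝ}
    (h : s.val.map c = s.val.map d) (F : ℝ → ℝ) :
    ∑ j ∈ s, F (c j) = ∑ j ∈ s, F (d j) := by
  have := congrArg (fun M => (M.map F).sum) h
  simp only [Multiset.map_map] at this
  exact this

lemma antitoneOn_Icc_of_succ_le {N : ℕ} {d : ℕ → ℝ}
    (h : ∀ j, 1 ≤ j → j < N → d (j + 1) ≤ d j) : AntitoneOn d (Set.Icc 1 N) :=
  antitoneOn_of_succ_le Set.ordConnected_Icc fun j _ hj hj' => by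
    rw [Order.succ_eq_add_one] at hj' ⊢
    exact h j hj.1 (by simpa using hj'.2)

noncomputable def hingeObjective {ι : Type*} (α : ℝ) (s : Finset ι) (c : ι → ℝ) (a : ℝ) : ℝ :=
  α / 2 * a ^ 2 + 1 / 2 * ∑ j ∈ s, max (c j - a) 0 ^ 2

noncomputable def hingeSlope {ι : Type*} (α : ℝ) (s : Finset ι) (c : ι → ℝ) (a : ℝ) : ℝ :=
  α * a - ∑ j ∈ s, max (c j - a) 0

section Hinge

variable {ι : Type*} (α : ℝ) (s : Finset ι) (c : ι → ℝ)

lemma sq_max_sub_zero_tangent_le (b m x : ℝ) :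
    max (b - m) 0 ^ 2 - 2 * max (b - m) 0 * (x - m) ≤ max (b - x) 0 ^ 2 := by
  rcases le_total (b - m) 0 with h | h
  · rw [max_eq_right h]
    simp
  · rw [max_eq_left h]
    rcases le_total (b - x) 0 with h' | h'
    · rw [max_eq_right h']
      nlinarith
    · rw [max_eq_left h']
      nlinarith [sq_nonneg (x - m)]

lemma hingeObjective_tangent_le (m x : ℝ) :
    hingeObjective α s c m + (x - m) * hingeSlope α s c m + α / 2 * (x - m) ^ 2
      ≤ hingeObjective α s c x := by
  have hsum := Finset.sum_le_sum fun j (_ : j ∈ s) => sq_max_sub_zero_tangent_le (c j) m x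
  rw [Finset.sum_sub_distrib, ← Finset.sum_mul, ← Finset.mul_sum] at hsum
  unfold hingeObjective hingeSlope
  nlinarith

variable {α} in
lemma hingeSlope_monotone (hα : 0 ≤ α) : Monotone (hingeSlope α s c) := fun a b hab => by
  have : ∑ j ∈ s, max (c j - b) 0 ≤ ∑ j ∈ s, max (c j - a) 0 :=
    Finset.sum_le_sum fun j _ => max_le_max (by linarith) le_rfl
  unfold hingeSlope
  nlinarith

end Hinge

lemma sum_max_sub_eq_of_threshold {ι : Type*} [DecidableEq ι] {s t : Finset ι} {c : ι → ℝ}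
    {a : ℝ} (hst : s ⊆ t) (hs : ∀ j ∈ s, a ≤ c j) (ht : ∀ j ∈ t \ s, c j ≤ a) :
    ∑ j ∈ t, max (c j - a) 0 = ∑ j ∈ s, c j - s.card * a := by
  rw [← Finset.sum_sdiff hst, Finset.sum_eq_zero fun j hj => max_eq_right (sub_nonpos.2 (ht j hj)),
    Finset.sum_congr rfl fun j hj => max_eq_left (sub_nonneg.2 (hs j hj)), Finset.sum_sub_distrib,
    Finset.sum_const, nsmul_eq_mul, zero_add]

lemma isMin_and_unique_of_tangent_le {f : ℝ → ℝ} {S : Set ℝ} {m D μ : ℝ} (hμ : 0 < μ)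
    (hf : ∀ x, f m + (x - m) * D + μ / 2 * (x - m) ^ 2 ≤ f x) (hS : ∀ x ∈ S, 0 ≤ (x - m) * D) :
    (∀ x ∈ S, f m ≤ f x) ∧ (∀ x ∈ S, f x = f m → x = m) := by
  refine ⟨fun x hx => by nlinarith [hf x, hS x hx, sq_nonneg (x - m)], fun x hx hx' => ?_⟩
  have : (x - m) ^ 2 = 0 := by nlinarith [hf x, hS x hx, sq_nonneg (x - m)]
  exact sub_eq_zero.1 (pow_eq_zero_iff two_ne_zero |>.1 this)

lemma sub_min_mul_nonneg {D : ℝ → ℝ} (hD : Monotone D) {a b x : ℝ} (ha : D a = 0) (hx : x ≤ b) :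
    0 ≤ (x - min b a) * D (min b a) := by
  rcases le_total b a with hba | hab
  · rw [min_eq_left hba]
    exact mul_nonneg_of_nonpos_of_nonpos (by linarith) (ha ▸ hD hba)
  · rw [min_eq_right hab, ha, mul_zero]

noncomputable def shrunkMean (α : ℝ) (d : ℕ → ℝ) (k : ℕ) : ℝ :=
  (∑ j ∈ Icc 1 k, d j) / (α + k)

section ShrunkMean

variable {α : ℝ} {d : ℕ → ℝ}

lemma mul_shrunkMean (hα : 0 < α) (k : ℕ) : (α + k) * shrunkMean α d k = ∑ j ∈ Icc 1 k, d j :=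
  mul_div_cancel₀ _ (by positivity)

lemma shrunkMean_one (hα : 0 < α) : (α + 1) * shrunkMean α d 1 = d 1 := by
  simpa using mul_shrunkMean (d := d) hα 1

lemma mul_shrunkMean_succ (hα : 0 < α) (k : ℕ) :
    (α + (k + 1)) * shrunkMean α d (k + 1) = (α + k) * shrunkMean α d k + d (k + 1) := by
  rw [mul_shrunkMean hα, ← Nat.cast_add_one, mul_shrunkMean hα, Finset.sum_Icc_succ_top (by omega)]

lemma shrunkMean_le_succ_and_succ_le (hα : 0 < α) {k : ℕ} (h : shrunkMean α d k ≤ d (k + 1)) :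
    shrunkMean α d k ≤ shrunkMean α d (k + 1) ∧ shrunkMean α d (k + 1) ≤ d (k + 1) := by
  have hrec := mul_shrunkMean_succ (d := d) hα k
  have hk : (0 : ℝ) < α + k := by positivity
  constructor <;> nlinarith

lemma shrunkMean_monotoneOn (hα : 0 < α) {K : ℕ}
    (hbelow : ∀ k, 1 ≤ k → k < K → shrunkMean α d k ≤ d (k + 1)) :
    MonotoneOn (shrunkMean α d) (Set.Icc 1 K) :=
  monotoneOn_of_le_succ Set.ordConnected_Icc fun k _ hk hk' => by
    rw [Order.succ_eq_add_one] at hk' ⊢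
    exact (shrunkMean_le_succ_and_succ_le hα (hbelow k hk.1 (by simpa using hk'.2))).1

lemma shrunkMean_le_of_nonneg (hα : 0 < α) {K : ℕ} (hK : 1 ≤ K)
    (hbelow : ∀ k, 1 ≤ k → k < K → shrunkMean α d k ≤ d (k + 1)) (hpos : 0 ≤ shrunkMean α d K) :
    shrunkMean α d K ≤ d K := by
  rcases hK.eq_or_lt with rfl | hK
  · nlinarith [shrunkMean_one (d := d) hα]
  · obtain ⟨k, rfl⟩ := Nat.exists_eq_add_of_lt hK
    exact (shrunkMean_le_succ_and_succ_le hα (hbelow (1 + k) (by omega) (by omega))).2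

theorem hingeSlope_max_zero_shrunkMean_eq_zero (hα : 0 < α) {N K : ℕ}
    (hsort : AntitoneOn d (Set.Icc 1 N)) (hK1 : 1 ≤ K) (hKN : K ≤ N)
    (hbelow : ∀ k, 1 ≤ k → k < K → shrunkMean α d k ≤ d (k + 1))
    (habove : K < N → d (K + 1) < shrunkMean α d K) :
    hingeSlope α (Icc 1 N) d (max 0 (shrunkMean α d K)) = 0 := by
  rcases le_total (shrunkMean α d K) 0 with hneg | hpos
  · have hd1 : d 1 ≤ 0 := by
      have := shrunkMean_monotoneOn hα hbelow ⟨le_rfl, hK1⟩ ⟨hK1, le_rfl⟩ hK1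
      nlinarith [shrunkMean_one (d := d) hα]
    rw [max_eq_left hneg, hingeSlope, mul_zero, zero_sub, neg_eq_zero]
    refine Finset.sum_eq_zero fun j hj => max_eq_right ?_
    have hj := Finset.mem_Icc.1 hj
    linarith [hsort ⟨le_rfl, hj.1.trans hj.2⟩ hj hj.1]
  · have hdK := shrunkMean_le_of_nonneg hα hK1 hbelow hpos
    have hsum := sum_max_sub_eq_of_threshold (c := d) (a := shrunkMean α d K)
      (Finset.Icc_subset_Icc_right (a := 1) hKN) (fun j hj => ?_) (fun j hj => ?_)
    · rw [max_eq_right hpos, hingeSlope, hsum, ← mul_shrunkMean hα K, Nat.card_Icc]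
      push_cast
      ring
    · have hj := Finset.mem_Icc.1 hj
      exact hdK.trans (hsort ⟨hj.1, hj.2.trans hKN⟩ ⟨hK1, hKN⟩ hj.2)
    · obtain ⟨hjN, hjK⟩ := Finset.mem_sdiff.1 hj
      simp only [Finset.mem_Icc] at hjN hjK
      have hKj : K < j := by omega
      exact (hsort ⟨by omega, by omega⟩ hjN hKj).trans (habove (by omega)).le

end ShrunkMean

theorem stmt_3_general (α : ℝ) (hα : 0 < α) (N : ℕ) (c d : ℕ → ℝ)
    (hperm : Multiset.map c (Finset.Icc 1 N).val = Multiset.map d (Finset.Icc 1 N).val)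
    (hsort : ∀ j, 1 ≤ j → j < N → d (j + 1) ≤ d j)
    (g : ℝ → ℝ)
    (hg : ∀ a, g a = α / 2 * a ^ 2 + 1 / 2 * ∑ j ∈ Finset.Icc 1 N, max (c j - a) 0 ^ 2)
    (A : ℕ → ℝ) (hA : ∀ k, A k = (∑ j ∈ Finset.Icc 1 k, d j) / (α + k))
    (kstar : ℕ) (hk1 : 1 ≤ kstar) (hkN : kstar ≤ N)
    (hcond : kstar = N ∨ A kstar > d (kstar + 1))
    (hleast : ∀ k, 1 ≤ k → k < kstar → ¬ (k = N ∨ A k > d (k + 1))) :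
    (∀ x ∈ Set.Icc (0 : ℝ) 1, g (max 0 (min 1 (A kstar))) ≤ g x) ∧
    (∀ x ∈ Set.Icc (0 : ℝ) 1, g x = g (max 0 (min 1 (A kstar))) → x = max 0 (min 1 (A kstar))) := by
  obtain rfl : A = shrunkMean α d := funext hA
  obtain rfl : g = hingeObjective α (Icc 1 N) d := funext fun a => by
    rw [hg, hingeObjective, Finset.sum_comp_eq_of_map_eq hperm fun b => max (b - a) 0 ^ 2]
  have hcrit := hingeSlope_max_zero_shrunkMean_eq_zero hα (antitoneOn_Icc_of_succ_le hsort) hk1 hkN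
    (fun k hk hkK => not_lt.1 fun h => hleast k hk hkK (Or.inr h))
    (fun hKN => hcond.resolve_left hKN.ne)
  rw [max_min_distrib_left, max_eq_right zero_le_one]
  exact isMin_and_unique_of_tangent_le hα (hingeObjective_tangent_le α _ d _)
    fun x hx => sub_min_mul_nonneg (hingeSlope_monotone _ d hα.le) hcrit hx.2

/-- Proposition 3: let `g(a) = (α/2)a² + ½ ∑_{j=1}^N max(c_j − a, 0)²`, let
`d 1 ≥ d 2 ≥ … ≥ d N` be the values `c_1, …, c_N` sorted in nonincreasing order
(a rearrangement, expressed as an equality of multisets), let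
`A k = (∑_{j=1}^k d j)/(α + k)`, and let `k*` be the smallest `k ∈ {1, …, N}`
such that `A k > d (k+1)` (with the convention `d (N+1) = −∞`, so the condition
holds vacuously at `k = N` and `k*` exists).  Then the unique minimizer of `g`
over `[0, 1]` is `max(0, min(1, A k*))`. -/
theorem stmt_3 (α : ℝ) (hα : 0 < α) (N : ℕ) (hN : 1 ≤ N) (c d : ℕ → ℝ)
    (hperm : Multiset.map c (Finset.Icc 1 N).val = Multiset.map d (Finset.Icc 1 N).val)
    (hsort : ∀ j, 1 ≤ j → j < N → d (j + 1) ≤ d j)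
    (g : ℝ → ℝ)
    (hg : ∀ a, g a = α / 2 * a ^ 2 + 1 / 2 * ∑ j ∈ Finset.Icc 1 N, max (c j - a) 0 ^ 2)
    (A : ℕ → ℝ) (hA : ∀ k, A k = (∑ j ∈ Finset.Icc 1 k, d j) / (α + k))
    (kstar : ℕ) (hk1 : 1 ≤ kstar) (hkN : kstar ≤ N)
    (hcond : kstar = N ∨ A kstar > d (kstar + 1))
    (hleast : ∀ k, 1 ≤ k → k < kstar → ¬ (k = N ∨ A k > d (k + 1))) :
    (∀ x ∈ Set.Icc (0 : ℝ) 1, g (max 0 (min 1 (A kstar))) ≤ g x) ∧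
    (∀ x ∈ Set.Icc (0 : ℝ) 1, g x = g (max 0 (min 1 (A kstar))) → x = max 0 (min 1 (A kstar))) :=
  stmt_3_general α hα N c d hperm hsort g hg A hA kstar hk1 hkN hcond hleast
end
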